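/- arXiv:2103.13531 — 2 statements merged into one kernel-verified Lean document; each statement's English description precedes it below -/
import Mathlib

section
/- Let α be a unit-speed curve with positive curvature lying on a general cone with vertex at the origin. If α is a geodesic of the cone, then the function δ(s) defined by α(s) × α'(s) = δ(s)·n(s) (which exists since the surface normal along a geodesic is parallel to the principal normal n) is constant and nonzero; consequently ‖α × α'‖ is a nonzero constant. -/
open Real Set
open scoped RealInnerProductSpace

noncomputable section

/-- Euclidean 3-space. -/
abbrev E3 := EuclideanSpace ℝ (Fin 3)

/-- Constructor for points of `E3`. -/
def e3 (x y z : ℝ) : E3 := (WithLp.equiv 2 (Fin 3 → ℝ)).symm ![x, y, z]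

/-- The cross product on `E3`. -/
def cross3 (a b : E3) : E3 :=
  e3 (a 1 * b 2 - a 2 * b 1) (a 2 * b 0 - a 0 * b 2) (a 0 * b 1 - a 1 * b 0)

/-!
Differentiating `α × T = δ N` with the Frenet equations gives `κ (α × N) = δ N' + δ' N`.
Both `α × N` and `N'` are orthogonal to the unit field `N`, so pairing with `N` gives `δ' = 0`,
and `δ` is constant on the interval `I`. If the constant were `0`, then `α × T` and hence
`κ (α × N)` would vanish on `I`; as `T ⊥ N`, this forces `α = 0` on `I`, so `T = α' = 0`.
-/

open Filter Matrix Topology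

section Calculus

variable {𝕜 F : Type*} [NontriviallyNormedField 𝕜] [NormedAddCommGroup F] [NormedSpace 𝕜 F]

theorem HasDerivAt.eq_zero_of_eventuallyEq_const {f : 𝕜 → F} {f' c : F} {s : 𝕜}
    (hf : HasDerivAt f f' s) (hc : f =ᶠ[𝓝 s] fun _ => c) : f' = 0 :=
  hf.unique ((hasDerivAt_const s c).congr_of_eventuallyEq hc)

variable {E : Type*} [NormedAddCommGroup E] [InnerProductSpace ℝ E]

theorem HasDerivAt.inner_eq_zero_of_eventually_norm_eq {f : ℝ → E} {f' : E} {s r : ℝ}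
    (hf : HasDerivAt f f' s) (hr : ∀ᶠ t in 𝓝 s, ‖f t‖ = r) : ⟪f s, f'⟫ = 0 := by
  have := hf.norm_sq.eq_zero_of_eventuallyEq_const (c := r ^ 2)
    (hr.mono fun t ht => by simp only [ht])
  simpa using this

theorem HasDerivAt.inner_eq_of_eventually_eq_smul {f N : ℝ → E} {δ : ℝ → ℝ} {f' N' : E}
    {δ' s : ℝ} (hf : HasDerivAt f f' s) (hδ : HasDerivAt δ δ' s) (hN : HasDerivAt N N' s)
    (hN1 : ∀ᶠ t in 𝓝 s, ‖N t‖ = 1) (hfδN : ∀ᶠ t in 𝓝 s, f t = δ t • N t) :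
    ⟪f', N s⟫ = δ' := by
  have hf' : f' = δ s • N' + δ' • N s := hf.unique ((hδ.smul hN).congr_of_eventuallyEq hfδN)
  have hNN' : ⟪N s, N'⟫ = 0 := hN.inner_eq_zero_of_eventually_norm_eq hN1
  rw [hf', inner_add_left, real_inner_smul_left, real_inner_smul_left, real_inner_comm,
    hNN', real_inner_self_eq_norm_sq, hN1.self_of_nhds]
  ring

end Calculus

section Cross

lemma cross3_eq_crossProduct (a b : E3) :
    cross3 a b = WithLp.toLp 2 (a.ofLp ⨯₃ b.ofLp) := by
  ext i; fin_cases i <;> simp [cross3, e3, cross_apply]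

lemma real_inner_eq_dotProduct (a b : E3) : ⟪a, b⟫ = a.ofLp ⬝ᵥ b.ofLp := by
  rw [EuclideanSpace.inner_eq_star_dotProduct, star_trivial, dotProduct_comm]

@[simp]
lemma cross3_self (a : E3) : cross3 a a = 0 := by
  simp [cross3_eq_crossProduct]

lemma cross3_smul_right (c : ℝ) (a b : E3) : cross3 a (c • b) = c • cross3 a b := by
  simp [cross3_eq_crossProduct]

@[simp]
lemma inner_cross3_right (a b : E3) : ⟪cross3 a b, b⟫ = 0 := by
  simp [cross3_eq_crossProduct, real_inner_eq_dotProduct, dotProduct_comm]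

lemma inner_cross3_cross3 (a b c d : E3) :
    ⟪cross3 a b, cross3 c d⟫ = ⟪a, c⟫ * ⟪b, d⟫ - ⟪a, d⟫ * ⟪b, c⟫ := by
  simp only [cross3_eq_crossProduct, real_inner_eq_dotProduct, cross_dot_cross]

lemma eq_zero_of_cross3_eq_zero {a u v : E3} (hu : u ≠ 0) (hv : v ≠ 0) (huv : ⟪u, v⟫ = 0)
    (hau : cross3 a u = 0) (hav : cross3 a v = 0) : a = 0 := by
  have h₁ := inner_cross3_cross3 a u a u
  have h₂ := inner_cross3_cross3 a v a v
  have h₃ := inner_cross3_cross3 a u a v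
  simp only [hau, hav, inner_zero_left, huv, mul_zero, zero_sub, real_inner_comm u,
    real_inner_comm v] at h₁ h₂ h₃
  -- Lagrange: `‖a‖²‖u‖² = ⟪u,a⟫²`, `‖a‖²‖v‖² = ⟪v,a⟫²`, and `⟪u,a⟫⟪v,a⟫ = 0`
  have h : ⟪a, a⟫ * ⟪a, a⟫ * (⟪u, u⟫ * ⟪v, v⟫) = 0 := by
    linear_combination -(⟪a, a⟫ * ⟪v, v⟫) * h₁ - ⟪u, a⟫ ^ 2 * h₂ + ⟪u, a⟫ * ⟪v, a⟫ * h₃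
  simpa [hu, hv] using h

def cross3CLM : E3 →L[ℝ] E3 →L[ℝ] E3 :=
  LinearMap.toContinuousLinearMap
    (LinearMap.toContinuousLinearMap.toLinearMap ∘ₗ
      ((crossProduct.compl₁₂ (WithLp.linearEquiv 2 ℝ (Fin 3 → ℝ)).toLinearMap
        (WithLp.linearEquiv 2 ℝ (Fin 3 → ℝ)).toLinearMap).compr₂
          (WithLp.linearEquiv 2 ℝ (Fin 3 → ℝ)).symm.toLinearMap))

lemma cross3CLM_apply (a b : E3) : cross3CLM a b = cross3 a b := by
  rw [cross3_eq_crossProduct]; rfl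

theorem HasDerivAt.cross3 {f g : ℝ → E3} {f' g' : E3} {s : ℝ}
    (hf : HasDerivAt f f' s) (hg : HasDerivAt g g' s) :
    HasDerivAt (fun t => cross3 (f t) (g t)) (cross3 (f s) g' + cross3 f' (g s)) s := by
  simpa only [cross3CLM_apply] using
    cross3CLM.hasDerivAt_of_bilinear (fun _ => hf) (fun _ => hg)

end Cross

section FrenetCurve

variable {U : Set ℝ} {α T N : ℝ → E3} {κ : ℝ → ℝ}

lemma hasDerivAt_cross3_tangent {s : ℝ} (hα : HasDerivAt α (T s) s)
    (hT : HasDerivAt T (κ s • N s) s) :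
    HasDerivAt (fun t => cross3 (α t) (T t)) (κ s • cross3 (α s) (N s)) s := by
  simpa only [cross3_self, add_zero, cross3_smul_right] using hα.cross3 hT

lemma inner_tangent_normal_eq_zero (hU : IsOpen U) (hT : ∀ s ∈ U, HasDerivAt T (κ s • N s) s)
    (hTu : ∀ s ∈ U, ‖T s‖ = 1) (hκ : ∀ s ∈ U, κ s ≠ 0) {s : ℝ} (hs : s ∈ U) :
    ⟪T s, N s⟫ = 0 := by
  have := (hT s hs).inner_eq_zero_of_eventually_norm_eq ((hU.eventually_mem hs).mono hTu)
  rwa [real_inner_smul_right, mul_eq_zero, or_iff_right (hκ s hs)] at this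

lemma not_forall_cross3_tangent_eq_zero (hU : IsOpen U) (hne : U.Nonempty)
    (hα : ∀ s ∈ U, HasDerivAt α (T s) s) (hT : ∀ s ∈ U, HasDerivAt T (κ s • N s) s)
    (hTu : ∀ s ∈ U, ‖T s‖ = 1) (hNu : ∀ s ∈ U, ‖N s‖ = 1) (hκ : ∀ s ∈ U, κ s ≠ 0) :
    ¬ ∀ s ∈ U, cross3 (α s) (T s) = 0 := by
  intro hαT
  have hα0 : ∀ s ∈ U, α s = 0 := fun s hs => by
    have hαN := (hasDerivAt_cross3_tangent (hα s hs) (hT s hs)).eq_zero_of_eventuallyEq_const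
      ((hU.eventually_mem hs).mono hαT)
    exact eq_zero_of_cross3_eq_zero (norm_ne_zero_iff.mp (by simp [hTu s hs]))
      (norm_ne_zero_iff.mp (by simp [hNu s hs])) (inner_tangent_normal_eq_zero hU hT hTu hκ hs)
      (hαT s hs) ((smul_eq_zero.mp hαN).resolve_left (hκ s hs))
  obtain ⟨s, hs⟩ := hne
  have hT0 := (hα s hs).eq_zero_of_eventuallyEq_const ((hU.eventually_mem hs).mono hα0)
  simpa [hT0] using hTu s hs

end FrenetCurve

theorem geodesic_delta_const_general (I : Set ℝ) (hIo : IsOpen I) (hIc : Convex ℝ I)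
    (α T N B : ℝ → E3) (κ τ : ℝ → ℝ)
    (hα : ∀ s ∈ I, HasDerivAt α (T s) s)
    (hT : ∀ s ∈ I, HasDerivAt T (κ s • N s) s)
    (hN : ∀ s ∈ I, HasDerivAt N ((-κ s) • T s + τ s • B s) s)
    (hTu : ∀ s ∈ I, ‖T s‖ = 1)
    (hNu : ∀ s ∈ I, ‖N s‖ = 1)
    (hκ : ∀ s ∈ I, 0 < κ s)
    (hne : I.Nonempty)
    (δ δd : ℝ → ℝ)
    (hδdiff : ∀ s ∈ I, HasDerivAt δ (δd s) s)
    (hδ : ∀ s ∈ I, cross3 (α s) (T s) = δ s • N s) :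
    ∃ c : ℝ, c ≠ 0 ∧ ∀ s ∈ I, δ s = c ∧ ‖cross3 (α s) (T s)‖ = |c| := by
  have hδd : ∀ s ∈ I, δd s = 0 := fun s hs => by
    have hloc := hIo.eventually_mem hs
    rw [← (hasDerivAt_cross3_tangent (hα s hs) (hT s hs)).inner_eq_of_eventually_eq_smul
      (hδdiff s hs) (hN s hs) (hloc.mono hNu) (hloc.mono hδ), real_inner_smul_left,
      inner_cross3_right, mul_zero]
  obtain ⟨s₀, hs₀⟩ := hne
  have hconst : ∀ s ∈ I, δ s = δ s₀ := fun s hs =>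
    hIo.is_const_of_deriv_eq_zero hIc.isPreconnected
      (fun t ht => (hδdiff t ht).differentiableAt.differentiableWithinAt)
      (fun t ht => by simp [(hδdiff t ht).deriv, hδd t ht]) hs hs₀
  refine ⟨δ s₀, fun h0 => ?_, fun s hs => ⟨hconst s hs, ?_⟩⟩
  · refine not_forall_cross3_tangent_eq_zero hIo ⟨s₀, hs₀⟩ hα hT hTu hNu
      (fun s hs => (hκ s hs).ne') fun s hs => ?_
    rw [hδ s hs, hconst s hs, h0, zero_smul]
  · rw [hδ s hs, hconst s hs, norm_smul, hNu s hs, mul_one, Real.norm_eq_abs]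

/-- Along a geodesic on a cone with vertex at the origin the surface normal is
parallel to the principal normal, so `α × α' = δ • n` for some function `δ`;
this `δ` is a nonzero constant, hence `‖α × α'‖` is a nonzero constant. -/
theorem geodesic_delta_const (I : Set ℝ) (hIo : IsOpen I) (hIc : Convex ℝ I)
    (α T N B : ℝ → E3) (κ τ : ℝ → ℝ)
    (hα : ∀ s ∈ I, HasDerivAt α (T s) s)
    (hT : ∀ s ∈ I, HasDerivAt T (κ s • N s) s)
    (hN : ∀ s ∈ I, HasDerivAt N ((-κ s) • T s + τ s • B s) s)
    (hB : ∀ s ∈ I, HasDerivAt B ((-τ s) • N s) s)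
    (hTu : ∀ s ∈ I, ‖T s‖ = 1)
    (hNu : ∀ s ∈ I, ‖N s‖ = 1)
    (hBdef : ∀ s ∈ I, B s = cross3 (T s) (N s))
    (hκ : ∀ s ∈ I, 0 < κ s)
    (hne : I.Nonempty)
    (δ δd : ℝ → ℝ)
    (hδdiff : ∀ s ∈ I, HasDerivAt δ (δd s) s)
    (hδ : ∀ s ∈ I, cross3 (α s) (T s) = δ s • N s) :
    ∃ c : ℝ, c ≠ 0 ∧ ∀ s ∈ I, δ s = c ∧ ‖cross3 (α s) (T s)‖ = |c| :=
  geodesic_delta_const_general I hIo hIc α T N B κ τ hα hT hN hTu hNu hκ hne δ δd hδdiff hδ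
end
end

section
/- A unit-speed curve α with positive curvature is a geodesic on a circular cone with vertex at the origin if and only if α is simultaneously a rectifying curve and a slant helix. -/
open Real Set
open scoped RealInnerProductSpace

noncomputable section

/-- The circle at angle `ψ` on the unit sphere, parametrized by arc length. -/
def ycirc (ψ t : ℝ) : E3 :=
  e3 (Real.sin ψ * Real.cos (t / Real.sin ψ)) (Real.sin ψ * Real.sin (t / Real.sin ψ)) (Real.cos ψ)

/-- The derivative of `ycirc ψ`. -/
def ycirc' (ψ t : ℝ) : E3 :=
  e3 (-Real.sin (t / Real.sin ψ)) (Real.cos (t / Real.sin ψ)) 0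

/-! On a rectifying curve `⟪α, T⟫ = s + c` and `⟪α, B⟫ = b` with `b ≠ 0`, and differentiating
`⟪α, N⟫ = 0` gives `κ (s + c) = τ b`; in particular `‖α‖² = (s + c)² + b²`. If moreover
`⟪N, U⟫ = k` is constant, then `κ ⟪T, U⟫ = τ ⟪B, U⟫`, and the two relations make
`⟪α, U⟫ / ‖α‖ = a` constant: `α` lies on the circular cone with axis `U`. Differentiating
`⟪T, U⟫ = a (s + c) / ‖α‖` gives `κ k ‖α‖³ = a b²`, which together with `a² + k² = 1` forces
`0 < |a| < 1`, so the cone is a genuine one, of half-angle `arccos |a|`. Both `N` and the unit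
normal of the cone along the ruling through `α` are orthogonal to `α` and to `T`, hence they agree
up to sign.

Conversely, on such a cone `N = ± (cone normal)` is orthogonal to the ruling through `α`, and
`⟪N, axis⟫ = ± sin ψ` is continuous, hence of constant sign on the interval. -/

@[simp] lemma e3_apply_zero (x y z : ℝ) : e3 x y z 0 = x := rfl
@[simp] lemma e3_apply_one (x y z : ℝ) : e3 x y z 1 = y := rfl
@[simp] lemma e3_apply_two (x y z : ℝ) : e3 x y z 2 = z := rfl

lemma inner_E3 (x y : E3) : ⟪x, y⟫ = x 0 * y 0 + x 1 * y 1 + x 2 * y 2 := by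
  simp [PiLp.inner_apply, Fin.sum_univ_three, mul_comm]

lemma norm_sq_E3 (x : E3) : ‖x‖ ^ 2 = x 0 ^ 2 + x 1 ^ 2 + x 2 ^ 2 := by
  rw [← real_inner_self_eq_norm_sq, inner_E3]; ring

lemma norm_E3_eq_one {x : E3} (h : x 0 ^ 2 + x 1 ^ 2 + x 2 ^ 2 = 1) : ‖x‖ = 1 :=
  (pow_eq_one_iff_of_nonneg (norm_nonneg x) two_ne_zero).mp (by rw [norm_sq_E3, h])

lemma E3_ext {x y : E3} (h0 : x 0 = y 0) (h1 : x 1 = y 1) (h2 : x 2 = y 2) : x = y := by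
  ext i; fin_cases i <;> assumption

lemma inner_cross3_self_left (a b : E3) : ⟪a, cross3 a b⟫ = 0 := by
  simp only [inner_E3, cross3, e3_apply_zero, e3_apply_one, e3_apply_two]; ring

lemma inner_cross3_self_right (a b : E3) : ⟪b, cross3 a b⟫ = 0 := by
  simp only [inner_E3, cross3, e3_apply_zero, e3_apply_one, e3_apply_two]; ring

lemma norm_cross3_sq (a b : E3) : ‖cross3 a b‖ ^ 2 = ‖a‖ ^ 2 * ‖b‖ ^ 2 - ⟪a, b⟫ ^ 2 := by
  simp only [norm_sq_E3, inner_E3, cross3, e3_apply_zero, e3_apply_one, e3_apply_two]; ring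

lemma cross3_cross3 (a b c : E3) : cross3 a (cross3 b c) = ⟪a, c⟫ • b - ⟪a, b⟫ • c := by
  apply E3_ext <;> simp [inner_E3, cross3] <;> ring

section Orthonormal

variable {a b : E3}

lemma norm_cross3_of_orthonormal (ha : ‖a‖ = 1) (hb : ‖b‖ = 1) (hab : ⟪a, b⟫ = 0) :
    ‖cross3 a b‖ = 1 := by
  have h := norm_cross3_sq a b
  rw [ha, hb, hab] at h
  nlinarith [norm_nonneg (cross3 a b)]

lemma eq_inner_smul_add_of_orthonormal (ha : ‖a‖ = 1) (hb : ‖b‖ = 1) (hab : ⟪a, b⟫ = 0)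
    (x : E3) : x = ⟪x, a⟫ • a + ⟪x, b⟫ • b + ⟪x, cross3 a b⟫ • cross3 a b := by
  set c := cross3 a b
  have haa : ⟪a, a⟫ = 1 := by simp [ha]
  have hbb : ⟪b, b⟫ = 1 := by simp [hb]
  have hcc : ⟪c, c⟫ = 1 := by simp [c, norm_cross3_of_orthonormal ha hb hab]
  have hba : ⟪b, a⟫ = 0 := by rw [real_inner_comm, hab]
  have hca : ⟪c, a⟫ = 0 := by rw [real_inner_comm, inner_cross3_self_left]
  have hcb : ⟪c, b⟫ = 0 := by rw [real_inner_comm, inner_cross3_self_right]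
  set y := x - (⟪x, a⟫ • a + ⟪x, b⟫ • b + ⟪x, c⟫ • c)
  have hya : ⟪y, a⟫ = 0 := by
    simp only [y, inner_sub_left, inner_add_left, real_inner_smul_left, haa, hba, hca]; ring
  have hyb : ⟪y, b⟫ = 0 := by
    simp only [y, inner_sub_left, inner_add_left, real_inner_smul_left, hab, hbb, hcb]; ring
  have hyc : ⟪y, c⟫ = 0 := by
    simp only [y, inner_sub_left, inner_add_left, real_inner_smul_left, hcc,
      inner_cross3_self_left, inner_cross3_self_right, c]; ring
  -- `y ⟂ a, b, a × b`, so Lagrange's identity turns `y × (a × b) = ⟪y, b⟫ a - ⟪y, a⟫ b = 0`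
  -- into `‖y‖ = 0`.
  have hy : ‖y‖ ^ 2 = 0 := by
    have h := norm_cross3_sq y c
    rw [cross3_cross3, hya, hyb, hyc, ← real_inner_self_eq_norm_sq c, hcc] at h
    simpa using h.symm
  exact sub_eq_zero.mp (norm_eq_zero.mp (pow_eq_zero_iff two_ne_zero |>.mp hy))

lemma norm_sq_eq_of_orthonormal (ha : ‖a‖ = 1) (hb : ‖b‖ = 1) (hab : ⟪a, b⟫ = 0) (x : E3) :
    ‖x‖ ^ 2 = ⟪x, a⟫ ^ 2 + ⟪x, b⟫ ^ 2 + ⟪x, cross3 a b⟫ ^ 2 := by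
  conv_lhs => rw [eq_inner_smul_add_of_orthonormal ha hb hab x]
  rw [norm_add_sq_real, norm_add_sq_real]
  simp [norm_smul, ha, hb, norm_cross3_of_orthonormal ha hb hab, inner_add_left,
    real_inner_smul_left, real_inner_smul_right, hab, inner_cross3_self_left,
    inner_cross3_self_right]

lemma eq_or_eq_neg_of_orthonormal (ha : ‖a‖ = 1) (hb : ‖b‖ = 1) (hab : ⟪a, b⟫ = 0) {v : E3}
    (hv : ‖v‖ = 1) (hva : ⟪v, a⟫ = 0) (hvc : ⟪v, cross3 a b⟫ = 0) : b = v ∨ b = -v := by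
  have hv_eq : v = ⟪v, b⟫ • b := by
    simpa [hva, hvc] using eq_inner_smul_add_of_orthonormal ha hb hab v
  have hvb : ⟪v, b⟫ ^ 2 = 1 := by
    simpa [hva, hvc, hv] using (norm_sq_eq_of_orthonormal ha hb hab v).symm
  rcases sq_eq_one_iff.mp hvb with h | h
  · left; rw [hv_eq, h, one_smul]
  · right; rw [hv_eq, h, neg_one_smul, neg_neg]

end Orthonormal

section Cone

variable {ψ : ℝ}

lemma norm_e3_zero_zero_one : ‖e3 0 0 1‖ = 1 :=
  norm_E3_eq_one (by simp)

lemma norm_ycirc (ψ t : ℝ) : ‖ycirc ψ t‖ = 1 :=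
  norm_E3_eq_one <| by
    simp only [ycirc, e3_apply_zero, e3_apply_one, e3_apply_two]
    linear_combination sin ψ ^ 2 * sin_sq_add_cos_sq (t / sin ψ) + sin_sq_add_cos_sq ψ

lemma norm_ycirc' (ψ t : ℝ) : ‖ycirc' ψ t‖ = 1 :=
  norm_E3_eq_one <| by
    simp only [ycirc', e3_apply_zero, e3_apply_one, e3_apply_two]
    linear_combination sin_sq_add_cos_sq (t / sin ψ)

lemma inner_ycirc'_ycirc (ψ t : ℝ) : ⟪ycirc' ψ t, ycirc ψ t⟫ = 0 := by
  simp only [inner_E3, ycirc, ycirc', e3_apply_zero, e3_apply_one, e3_apply_two]; ring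

lemma norm_cross3_ycirc (ψ t : ℝ) : ‖cross3 (ycirc' ψ t) (ycirc ψ t)‖ = 1 :=
  norm_cross3_of_orthonormal (norm_ycirc' ψ t) (norm_ycirc ψ t) (inner_ycirc'_ycirc ψ t)

lemma inner_cross3_ycirc_e3 (ψ t : ℝ) :
    ⟪cross3 (ycirc' ψ t) (ycirc ψ t), e3 0 0 1⟫ = -sin ψ := by
  simp only [inner_E3, cross3, ycirc, ycirc', e3_apply_zero, e3_apply_one, e3_apply_two]
  linear_combination -sin ψ * sin_sq_add_cos_sq (t / sin ψ)

lemma cross3_ycirc_eq (hψ : sin ψ ≠ 0) (t : ℝ) :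
    cross3 (ycirc' ψ t) (ycirc ψ t) = (cos ψ / sin ψ) • ycirc ψ t - (sin ψ)⁻¹ • e3 0 0 1 := by
  apply E3_ext <;> simp [cross3, ycirc, ycirc'] <;> field_simp
  linear_combination -sin ψ ^ 2 * sin_sq_add_cos_sq (t / sin ψ) - sin_sq_add_cos_sq ψ

lemma exists_linearIsometryEquiv_apply_e3 {W : E3} (hW : ‖W‖ = 1) :
    ∃ R : E3 ≃ₗᵢ[ℝ] E3, R (e3 0 0 1) = W := by
  have hon : Orthonormal ℝ (({2} : Set (Fin 3)).domRestrict fun _ => W) :=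
    ⟨fun _ => hW, fun i j hij => absurd (Subsingleton.elim i j) hij⟩
  obtain ⟨f, hf⟩ := hon.exists_orthonormalBasis_extension_of_card_eq (by simp)
  refine ⟨f.repr.symm, ?_⟩
  rw [show e3 0 0 1 = EuclideanSpace.single 2 1 by apply E3_ext <;> simp,
    f.repr_symm_single, hf 2 rfl]

lemma exists_eq_norm_smul_ycirc (hψ : 0 < sin ψ) (R : E3 ≃ₗᵢ[ℝ] E3) {x : E3}
    (hx : ⟪x, R (e3 0 0 1)⟫ = cos ψ * ‖x‖) : ∃ t, x = ‖x‖ • R (ycirc ψ t) := by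
  rcases eq_or_ne x 0 with rfl | hx0
  · exact ⟨0, by simp⟩
  set z := R.symm x
  have hz2 : z 2 = cos ψ * ‖x‖ := by
    rw [← hx, ← R.apply_symm_apply x, R.inner_map_map, inner_E3]
    simp [z]
  have hz : z 0 ^ 2 + z 1 ^ 2 = (sin ψ * ‖x‖) ^ 2 := by
    have h := norm_sq_E3 z
    rw [LinearIsometryEquiv.norm_map, hz2] at h
    linear_combination -h - ‖x‖ ^ 2 * sin_sq_add_cos_sq ψ
  set w : ℂ := ⟨z 0, z 1⟩
  have hw : ‖w‖ = sin ψ * ‖x‖ := by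
    rw [Complex.norm_eq_sqrt_sq_add_sq]
    simp only [w, hz]
    exact sqrt_sq (by positivity)
  have hw0 : w ≠ 0 := norm_ne_zero_iff.mp (by rw [hw]; positivity)
  refine ⟨Complex.arg w * sin ψ, ?_⟩
  rw [← R.apply_symm_apply x, ← R.map_smul]
  congr 1
  apply E3_ext <;> simp [z, w, ycirc, hψ.ne', Complex.cos_arg hw0, Complex.sin_arg, hw, hz2] <;>
    field_simp

lemma eq_or_eq_neg_cross3_ycirc {T N x : E3} (hT : ‖T‖ = 1) (hN : ‖N‖ = 1) (hTN : ⟪T, N⟫ = 0)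
    (hxN : ⟪x, N⟫ = 0) (hxB : ⟪x, cross3 T N⟫ ≠ 0) {t : ℝ} (hψ : 0 < sin ψ)
    (R : E3 ≃ₗᵢ[ℝ] E3) (hx : x = ‖x‖ • R (ycirc ψ t))
    (hTW : ⟪T, R (e3 0 0 1)⟫ = cos ψ * ⟪x, T⟫ / ‖x‖) :
    N = R (cross3 (ycirc' ψ t) (ycirc ψ t)) ∨ N = -R (cross3 (ycirc' ψ t) (ycirc ψ t)) := by
  set V := R (cross3 (ycirc' ψ t) (ycirc ψ t)) with hV
  have hx0 : ‖x‖ ≠ 0 := fun h => hxB (by rw [norm_eq_zero.mp h, inner_zero_left])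
  have hVx : ⟪V, x⟫ = 0 := by
    rw [hx, real_inner_smul_right, R.inner_map_map, real_inner_comm, inner_cross3_self_right,
      mul_zero]
  have hTy : ⟪T, R (ycirc ψ t)⟫ = ⟪x, T⟫ / ‖x‖ := by
    rw [eq_div_iff hx0]
    conv_rhs => rw [hx]
    rw [real_inner_smul_left, real_inner_comm, mul_comm]
  have hVT : ⟪V, T⟫ = 0 := by
    rw [real_inner_comm, hV, cross3_ycirc_eq hψ.ne', map_sub, map_smul, map_smul, inner_sub_right,
      real_inner_smul_right, real_inner_smul_right, hTy, hTW]
    field_simp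
    ring
  have hVB : ⟪V, cross3 T N⟫ = 0 := by
    have h := eq_inner_smul_add_of_orthonormal hT hN hTN x
    rw [hxN, zero_smul, add_zero] at h
    rw [h, inner_add_right, real_inner_smul_right, real_inner_smul_right, hVT, mul_zero,
      zero_add] at hVx
    exact (mul_eq_zero.mp hVx).resolve_left hxB
  exact eq_or_eq_neg_of_orthonormal hT hN hTN (by simp [V, norm_cross3_ycirc]) hVT hVB

end Cone

section Calculus

variable {F : Type*} [NormedAddCommGroup F] {I : Set ℝ} {s : ℝ}

lemma HasDerivAt.unique_of_eqOn [NormedSpace ℝ F] {f g : ℝ → F} {f' g' : F} (hI : IsOpen I)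
    (hs : s ∈ I) (hfg : EqOn f g I) (hf : HasDerivAt f f' s) (hg : HasDerivAt g g' s) :
    f' = g' :=
  (hf.congr_of_eventuallyEq (Filter.eventuallyEq_of_mem (hI.mem_nhds hs) hfg.symm)).unique hg

lemma IsOpen.exists_eq_const_of_hasDerivAt_zero [NormedSpace ℝ F] (hI : IsOpen I)
    (hI' : IsPreconnected I) {f : ℝ → F} (hf : ∀ s ∈ I, HasDerivAt f 0 s) :
    ∃ c, ∀ s ∈ I, f s = c :=
  hI.exists_is_const_of_deriv_eq_zero hI'
    (fun s hs => (hf s hs).differentiableAt.differentiableWithinAt) fun s hs => (hf s hs).deriv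

variable [InnerProductSpace ℝ F]

lemma HasDerivAt.norm {f : ℝ → F} {f' : F} (hf : HasDerivAt f f' s) (h0 : f s ≠ 0) :
    HasDerivAt (fun x => ‖f x‖) (⟪f s, f'⟫ / ‖f s‖) s := by
  have h := hf.norm_sq.sqrt (by positivity)
  simp only [sqrt_sq (norm_nonneg _)] at h
  convert h using 1
  field_simp

lemma inner_eq_of_inner_eq_mul_norm {α T : ℝ → F} {W : F} {a : ℝ} (hI : IsOpen I)
    (hα : ∀ s ∈ I, HasDerivAt α (T s) s) (hα0 : ∀ s ∈ I, α s ≠ 0)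
    (h : ∀ s ∈ I, ⟪α s, W⟫ = a * ‖α s‖) (hs : s ∈ I) :
    ⟪T s, W⟫ = a * (⟪α s, T s⟫ / ‖α s‖) := by
  have hd := (hα s hs).inner ℝ (hasDerivAt_const s W)
  rw [inner_zero_right, zero_add] at hd
  exact hd.unique_of_eqOn hI hs h (((hα s hs).norm (hα0 s hs)).const_mul a)

end Calculus

structure IsFrenetFrameOn (I : Set ℝ) (α T N B : ℝ → E3) (κ τ : ℝ → ℝ) : Prop where
  hasDerivAt_curve : ∀ s ∈ I, HasDerivAt α (T s) s
  hasDerivAt_tangent : ∀ s ∈ I, HasDerivAt T (κ s • N s) s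
  hasDerivAt_normal : ∀ s ∈ I, HasDerivAt N ((-κ s) • T s + τ s • B s) s
  hasDerivAt_binormal : ∀ s ∈ I, HasDerivAt B ((-τ s) • N s) s
  norm_tangent : ∀ s ∈ I, ‖T s‖ = 1
  norm_normal : ∀ s ∈ I, ‖N s‖ = 1
  binormal_eq : ∀ s ∈ I, B s = cross3 (T s) (N s)
  curvature_pos : ∀ s ∈ I, 0 < κ s

def IsRectifyingOn (I : Set ℝ) (α N : ℝ → E3) : Prop :=
  ∀ s ∈ I, ⟪α s, N s⟫ = 0

def IsSlantHelixOn (I : Set ℝ) (N : ℝ → E3) : Prop :=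
  ∃ U : E3, ‖U‖ = 1 ∧ ∃ k : ℝ, ∀ s ∈ I, ⟪N s, U⟫ = k

/-- `α` lies on the cone with vertex `0` over the circle `R (ycirc ψ ·)` (axis `R (e3 0 0 1)`),
and `N` is `±` the unit normal `R (ycirc' × ycirc)` of that cone along the ruling through `α s`. -/
def IsConeGeodesicOn (I : Set ℝ) (α N : ℝ → E3) : Prop :=
  ∃ ψ : ℝ, ψ ∈ Set.Ioo 0 (Real.pi / 2) ∧
    ∃ (R : E3 ≃ₗᵢ[ℝ] E3) (u t : ℝ → ℝ), ∀ s ∈ I,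
      0 < u s ∧
      α s = u s • R (ycirc ψ (t s)) ∧
      (N s = R (cross3 (ycirc' ψ (t s)) (ycirc ψ (t s))) ∨
       N s = -R (cross3 (ycirc' ψ (t s)) (ycirc ψ (t s))))

namespace IsConeGeodesicOn

variable {I : Set ℝ} {α N : ℝ → E3}

lemma isRectifyingOn (h : IsConeGeodesicOn I α N) : IsRectifyingOn I α N := by
  obtain ⟨ψ, -, R, u, t, h⟩ := h
  intro s hs
  obtain ⟨-, hα, hN⟩ := h s hs
  have h0 : ⟪R (ycirc ψ (t s)), R (cross3 (ycirc' ψ (t s)) (ycirc ψ (t s)))⟫ = 0 := by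
    rw [R.inner_map_map, inner_cross3_self_right]
  rcases hN with hN | hN <;> simp [hα, hN, real_inner_smul_left, h0]

lemma isSlantHelixOn (h : IsConeGeodesicOn I α N) (hI : IsPreconnected I)
    (hN : ContinuousOn N I) : IsSlantHelixOn I N := by
  obtain ⟨ψ, hψ, R, u, t, h⟩ := h
  have hsin : 0 < sin ψ := sin_pos_of_pos_of_lt_pi hψ.1 (by linarith [hψ.2, pi_pos])
  have hsq : EqOn ((fun s => ⟪N s, R (e3 0 0 1)⟫) ^ 2) ((fun _ => sin ψ) ^ 2) I := by
    intro s hs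
    have hy : ⟪R (cross3 (ycirc' ψ (t s)) (ycirc ψ (t s))), R (e3 0 0 1)⟫ = -sin ψ := by
      rw [R.inner_map_map, inner_cross3_ycirc_e3]
    rcases (h s hs).2.2 with hN | hN <;> simp [hN, hy]
  refine ⟨R (e3 0 0 1), by rw [R.norm_map, norm_e3_zero_zero_one], ?_⟩
  rcases hI.eq_or_eq_neg_of_sq_eq (hN.inner continuousOn_const) continuousOn_const hsq
    fun _ => hsin.ne' with h' | h'
  · exact ⟨sin ψ, h'⟩
  · exact ⟨-sin ψ, h'⟩

end IsConeGeodesicOn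

namespace IsFrenetFrameOn

variable {I : Set ℝ} {α T N B : ℝ → E3} {κ τ : ℝ → ℝ} {s : ℝ}

lemma inner_tangent_normal (hF : IsFrenetFrameOn I α T N B κ τ) (hI : IsOpen I) (hs : s ∈ I) :
    ⟪T s, N s⟫ = 0 := by
  have h : 2 * ⟪T s, κ s • N s⟫ = 0 :=
    (hF.hasDerivAt_tangent s hs).norm_sq.unique_of_eqOn hI hs (g := fun _ => 1)
      (fun x hx => by simp [hF.norm_tangent x hx]) (hasDerivAt_const s 1)
  rw [real_inner_smul_right] at h
  exact (mul_eq_zero.mp ((mul_eq_zero.mp h).resolve_left two_ne_zero)).resolve_left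
    (hF.curvature_pos s hs).ne'

lemma inner_tangent_binormal (hF : IsFrenetFrameOn I α T N B κ τ) (hs : s ∈ I) :
    ⟪T s, B s⟫ = 0 := by
  rw [hF.binormal_eq s hs, inner_cross3_self_left]

lemma eq_inner_smul_add (hF : IsFrenetFrameOn I α T N B κ τ) (hI : IsOpen I) (hs : s ∈ I)
    (x : E3) : x = ⟪x, T s⟫ • T s + ⟪x, N s⟫ • N s + ⟪x, B s⟫ • B s := by
  rw [hF.binormal_eq s hs]
  exact eq_inner_smul_add_of_orthonormal (hF.norm_tangent s hs) (hF.norm_normal s hs)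
    (hF.inner_tangent_normal hI hs) x

lemma norm_sq_eq (hF : IsFrenetFrameOn I α T N B κ τ) (hI : IsOpen I) (hs : s ∈ I) (x : E3) :
    ‖x‖ ^ 2 = ⟪x, T s⟫ ^ 2 + ⟪x, N s⟫ ^ 2 + ⟪x, B s⟫ ^ 2 := by
  rw [hF.binormal_eq s hs]
  exact norm_sq_eq_of_orthonormal (hF.norm_tangent s hs) (hF.norm_normal s hs)
    (hF.inner_tangent_normal hI hs) x

lemma exists_inner_curve_tangent_eq (hF : IsFrenetFrameOn I α T N B κ τ) (hI : IsOpen I)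
    (hI' : IsPreconnected I) (hr : IsRectifyingOn I α N) : ∃ c, ∀ s ∈ I, ⟪α s, T s⟫ = s + c := by
  obtain ⟨c, hc⟩ := hI.exists_eq_const_of_hasDerivAt_zero hI' (f := fun s => ⟪α s, T s⟫ - s)
    fun s hs => by
      have h := ((hF.hasDerivAt_curve s hs).inner ℝ (hF.hasDerivAt_tangent s hs)).sub
        (hasDerivAt_id s)
      rwa [real_inner_smul_right, hr s hs, real_inner_self_eq_norm_sq, hF.norm_tangent s hs,
        mul_zero, zero_add, one_pow, sub_self] at h
  exact ⟨c, fun s hs => by linarith [hc s hs]⟩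

lemma exists_inner_curve_binormal_eq (hF : IsFrenetFrameOn I α T N B κ τ) (hI : IsOpen I)
    (hI' : IsPreconnected I) (hr : IsRectifyingOn I α N) : ∃ b, ∀ s ∈ I, ⟪α s, B s⟫ = b :=
  hI.exists_eq_const_of_hasDerivAt_zero hI' fun s hs => by
    have h := (hF.hasDerivAt_curve s hs).inner ℝ (hF.hasDerivAt_binormal s hs)
    rwa [real_inner_smul_right, hr s hs, hF.inner_tangent_binormal hs, mul_zero, add_zero] at h

lemma curvature_mul_eq_torsion_mul (hF : IsFrenetFrameOn I α T N B κ τ) (hI : IsOpen I)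
    (hr : IsRectifyingOn I α N) {c b : ℝ} (hc : ∀ s ∈ I, ⟪α s, T s⟫ = s + c)
    (hb : ∀ s ∈ I, ⟪α s, B s⟫ = b) (hs : s ∈ I) : κ s * (s + c) = τ s * b := by
  have h := ((hF.hasDerivAt_curve s hs).inner ℝ (hF.hasDerivAt_normal s hs)).unique_of_eqOn hI hs
    hr (hasDerivAt_const s 0)
  rw [inner_add_right, real_inner_smul_right, real_inner_smul_right, hc s hs, hb s hs,
    hF.inner_tangent_normal hI hs] at h
  linarith

lemma exists_rectifying_constants (hF : IsFrenetFrameOn I α T N B κ τ) (hI : IsOpen I)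
    (hI' : IsPreconnected I) (hne : I.Nonempty) (hr : IsRectifyingOn I α N) :
    ∃ c b, b ≠ 0 ∧ (∀ s ∈ I, ⟪α s, T s⟫ = s + c) ∧ ∀ s ∈ I, ⟪α s, B s⟫ = b := by
  obtain ⟨c, hc⟩ := hF.exists_inner_curve_tangent_eq hI hI' hr
  obtain ⟨b, hb⟩ := hF.exists_inner_curve_binormal_eq hI hI' hr
  refine ⟨c, b, fun hb0 => ?_, hc, hb⟩
  -- With `b = 0` the relation `κ (s + c) = τ b` and `κ > 0` force `I ⊆ {-c}`.
  have hsub : I ⊆ {-c} := fun s hs => by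
    have h := hF.curvature_mul_eq_torsion_mul hI hr hc hb hs
    rw [hb0, mul_zero] at h
    have := (mul_eq_zero.mp h).resolve_left (hF.curvature_pos s hs).ne'
    rw [mem_singleton_iff]; linarith
  have h := interior_maximal hsub hI
  rw [interior_singleton] at h
  exact hne.ne_empty (subset_empty_iff.mp h)

lemma norm_sq_curve (hF : IsFrenetFrameOn I α T N B κ τ) (hI : IsOpen I)
    (hr : IsRectifyingOn I α N) {c b : ℝ} (hc : ∀ s ∈ I, ⟪α s, T s⟫ = s + c)
    (hb : ∀ s ∈ I, ⟪α s, B s⟫ = b) (hs : s ∈ I) : ‖α s‖ ^ 2 = (s + c) ^ 2 + b ^ 2 := by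
  rw [hF.norm_sq_eq hI hs, hc s hs, hr s hs, hb s hs]; ring

lemma curve_ne_zero {b : ℝ} (hb0 : b ≠ 0) (hb : ∀ s ∈ I, ⟪α s, B s⟫ = b) (hs : s ∈ I) :
    α s ≠ 0 :=
  fun h => hb0 (by rw [← hb s hs, h, inner_zero_left])

lemma inner_curve_eq (hF : IsFrenetFrameOn I α T N B κ τ) (hI : IsOpen I)
    (hr : IsRectifyingOn I α N) {c b : ℝ} (hc : ∀ s ∈ I, ⟪α s, T s⟫ = s + c)
    (hb : ∀ s ∈ I, ⟪α s, B s⟫ = b) (hs : s ∈ I) (x : E3) :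
    ⟪α s, x⟫ = (s + c) * ⟪T s, x⟫ + b * ⟪B s, x⟫ := by
  conv_lhs => rw [hF.eq_inner_smul_add hI hs (α s), hc s hs, hr s hs, hb s hs]
  simp only [inner_add_left, real_inner_smul_left, zero_mul, add_zero]

lemma curvature_mul_inner_tangent (hF : IsFrenetFrameOn I α T N B κ τ) (hI : IsOpen I)
    {U : E3} {k : ℝ} (hk : ∀ s ∈ I, ⟪N s, U⟫ = k) (hs : s ∈ I) :
    κ s * ⟪T s, U⟫ = τ s * ⟪B s, U⟫ := by
  have h := ((hF.hasDerivAt_normal s hs).inner ℝ (hasDerivAt_const s U)).unique_of_eqOn hI hs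
    hk (hasDerivAt_const s k)
  rw [inner_zero_right, zero_add, inner_add_left, real_inner_smul_left,
    real_inner_smul_left] at h
  linarith

lemma exists_inner_eq_mul_norm (hF : IsFrenetFrameOn I α T N B κ τ) (hI : IsOpen I)
    (hI' : IsPreconnected I) (hr : IsRectifyingOn I α N) {c b : ℝ} (hb0 : b ≠ 0)
    (hc : ∀ s ∈ I, ⟪α s, T s⟫ = s + c) (hb : ∀ s ∈ I, ⟪α s, B s⟫ = b) {U : E3} {k : ℝ}
    (hk : ∀ s ∈ I, ⟪N s, U⟫ = k) : ∃ a, ∀ s ∈ I, ⟪α s, U⟫ = a * ‖α s‖ := by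
  obtain ⟨a, ha⟩ := hI.exists_eq_const_of_hasDerivAt_zero hI'
    (f := fun s => ⟪α s, U⟫ / ‖α s‖) fun s hs => by
      have hα0 := curve_ne_zero hb0 hb hs
      have h := ((hF.hasDerivAt_curve s hs).inner ℝ (hasDerivAt_const s U)).div
        ((hF.hasDerivAt_curve s hs).norm hα0) (norm_ne_zero_iff.mpr hα0)
      -- `κ ⟪T, U⟫ = τ ⟪B, U⟫` and `κ (s + c) = τ b` give `b ⟪T, U⟫ = (s + c) ⟪B, U⟫`,
      -- which is exactly the vanishing of the numerator of the quotient rule.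
      have hTB : κ s * (b * ⟪T s, U⟫ - (s + c) * ⟪B s, U⟫) = 0 := by
        linear_combination b * hF.curvature_mul_inner_tangent hI hk hs -
          ⟪B s, U⟫ * hF.curvature_mul_eq_torsion_mul hI hr hc hb hs
      have hTB' := (mul_eq_zero.mp hTB).resolve_left (hF.curvature_pos s hs).ne'
      rw [inner_zero_right, zero_add, hc s hs, hF.inner_curve_eq hI hr hc hb hs] at h
      have hρ := hF.norm_sq_curve hI hr hc hb hs
      have h0 : (⟪T s, U⟫ * ‖α s‖ - ((s + c) * ⟪T s, U⟫ + b * ⟪B s, U⟫) * ((s + c) / ‖α s‖)) /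
          ‖α s‖ ^ 2 = 0 := by
        field_simp
        linear_combination ⟪T s, U⟫ * hρ + b * hTB'
      rwa [h0] at h
  exact ⟨a, fun s hs => by
    rw [← ha s hs, div_mul_cancel₀ _ (norm_ne_zero_iff.mpr (curve_ne_zero hb0 hb hs))]⟩

lemma curvature_mul_eq (hF : IsFrenetFrameOn I α T N B κ τ) (hI : IsOpen I)
    (hr : IsRectifyingOn I α N) {c b : ℝ} (hb0 : b ≠ 0) (hc : ∀ s ∈ I, ⟪α s, T s⟫ = s + c)
    (hb : ∀ s ∈ I, ⟪α s, B s⟫ = b) {U : E3} {k a : ℝ} (hk : ∀ s ∈ I, ⟪N s, U⟫ = k)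
    (ha : ∀ s ∈ I, ⟪α s, U⟫ = a * ‖α s‖) (hs : s ∈ I) :
    κ s * k = a * b ^ 2 / ‖α s‖ ^ 3 := by
  have hα0 := curve_ne_zero hb0 hb hs
  have hTU : EqOn (fun s => ⟪T s, U⟫) (fun s => a * ((s + c) / ‖α s‖)) I := fun s hs => by
    show ⟪T s, U⟫ = a * ((s + c) / ‖α s‖)
    rw [← hc s hs]
    exact inner_eq_of_inner_eq_mul_norm hI hF.hasDerivAt_curve
      (fun s hs => curve_ne_zero hb0 hb hs) ha hs
  have hd := (hF.hasDerivAt_tangent s hs).inner ℝ (hasDerivAt_const s U)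
  rw [inner_zero_right, zero_add, real_inner_smul_left, hk s hs] at hd
  rw [hd.unique_of_eqOn hI hs hTU ((((hasDerivAt_id s).add_const c).div
    ((hF.hasDerivAt_curve s hs).norm hα0) (norm_ne_zero_iff.mpr hα0)).const_mul a), hc s hs, id]
  field_simp
  linear_combination a * hF.norm_sq_curve hI hr hc hb hs

lemma sq_add_sq_eq_one (hF : IsFrenetFrameOn I α T N B κ τ) (hI : IsOpen I)
    (hr : IsRectifyingOn I α N) {c b : ℝ} (hb0 : b ≠ 0) (hc : ∀ s ∈ I, ⟪α s, T s⟫ = s + c)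
    (hb : ∀ s ∈ I, ⟪α s, B s⟫ = b) {U : E3} (hU : ‖U‖ = 1) {k a : ℝ}
    (hk : ∀ s ∈ I, ⟪N s, U⟫ = k) (ha : ∀ s ∈ I, ⟪α s, U⟫ = a * ‖α s‖) (hs : s ∈ I) :
    a ^ 2 + k ^ 2 = 1 := by
  have hα0 := norm_ne_zero_iff.mpr (curve_ne_zero hb0 hb hs)
  have hρ := hF.norm_sq_curve hI hr hc hb hs
  have hx : ⟪T s, U⟫ * ‖α s‖ = a * (s + c) := by
    rw [inner_eq_of_inner_eq_mul_norm hI hF.hasDerivAt_curve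
      (fun s hs => curve_ne_zero hb0 hb hs) ha hs, hc s hs]
    field_simp
  have hy : ⟪B s, U⟫ * ‖α s‖ = a * b := mul_left_cancel₀ hb0 <| by
    linear_combination ‖α s‖ * (hF.inner_curve_eq hI hr hc hb hs U).symm + ‖α s‖ * ha s hs -
      (s + c) * hx + a * hρ
  have hxy : (⟪T s, U⟫ ^ 2 + ⟪B s, U⟫ ^ 2 - a ^ 2) * ‖α s‖ ^ 2 = 0 := by
    linear_combination (⟪T s, U⟫ * ‖α s‖ + a * (s + c)) * hx +
      (⟪B s, U⟫ * ‖α s‖ + a * b) * hy - a ^ 2 * hρ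
  have hU' := hF.norm_sq_eq hI hs U
  rw [hU, real_inner_comm (T s), real_inner_comm (N s), real_inner_comm (B s), hk s hs] at hU'
  have := (mul_eq_zero.mp hxy).resolve_right (pow_ne_zero 2 hα0)
  linarith

lemma exists_cone_axis (hF : IsFrenetFrameOn I α T N B κ τ) (hI : IsOpen I)
    (hI' : IsPreconnected I) (hne : I.Nonempty) (hr : IsRectifyingOn I α N)
    (hh : IsSlantHelixOn I N) :
    ∃ W : E3, ‖W‖ = 1 ∧ ∃ a, 0 < a ∧ a < 1 ∧ ∀ s ∈ I, ⟪α s, W⟫ = a * ‖α s‖ := by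
  obtain ⟨U, hU, k, hk⟩ := hh
  obtain ⟨c, b, hb0, hc, hb⟩ := hF.exists_rectifying_constants hI hI' hne hr
  obtain ⟨a, ha⟩ := hF.exists_inner_eq_mul_norm hI hI' hr hb0 hc hb hk
  obtain ⟨s, hs⟩ := hne
  have hκk := hF.curvature_mul_eq hI hr hb0 hc hb hk ha hs
  have hak := hF.sq_add_sq_eq_one hI hr hb0 hc hb hU hk ha hs
  have hα0 := norm_ne_zero_iff.mpr (curve_ne_zero hb0 hb hs)
  have ha0 : a ≠ 0 := by
    rintro rfl
    rw [zero_mul, zero_div, mul_eq_zero] at hκk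
    rcases hκk with h | rfl
    · exact (hF.curvature_pos s hs).ne' h
    · norm_num at hak
  have hk0 : k ≠ 0 := by
    rintro rfl
    rw [mul_zero, eq_comm, div_eq_zero_iff] at hκk
    simp [ha0, hb0, hα0] at hκk
  have ha1 : |a| < 1 := by
    rw [← sq_lt_one_iff_abs_lt_one]
    linarith [sq_pos_of_ne_zero hk0]
  rcases abs_choice a with h | h
  · exact ⟨U, hU, |a|, abs_pos.mpr ha0, ha1, fun s hs => by rw [h, ha s hs]⟩
  · exact ⟨-U, by rw [norm_neg, hU], |a|, abs_pos.mpr ha0, ha1,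
      fun s hs => by rw [h, inner_neg_right, ha s hs, neg_mul]⟩

theorem isConeGeodesicOn (hF : IsFrenetFrameOn I α T N B κ τ) (hI : IsOpen I)
    (hI' : IsPreconnected I) (hne : I.Nonempty) (hr : IsRectifyingOn I α N)
    (hh : IsSlantHelixOn I N) : IsConeGeodesicOn I α N := by
  obtain ⟨W, hW, a, ha0, ha1, haW⟩ := hF.exists_cone_axis hI hI' hne hr hh
  obtain ⟨c, b, hb0, -, hb⟩ := hF.exists_rectifying_constants hI hI' hne hr
  have hα0 : ∀ s ∈ I, α s ≠ 0 := fun s hs => curve_ne_zero hb0 hb hs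
  obtain ⟨R, hR⟩ := exists_linearIsometryEquiv_apply_e3 hW
  set ψ := arccos a
  have hcos : cos ψ = a := cos_arccos (by linarith) ha1.le
  have hψ : ψ ∈ Ioo 0 (π / 2) := ⟨arccos_pos.mpr ha1, arccos_lt_pi_div_two.mpr ha0⟩
  have hsin : 0 < sin ψ := sin_pos_of_pos_of_lt_pi hψ.1 (by linarith [hψ.2, pi_pos])
  have key : ∀ s ∈ I, ∃ t, α s = ‖α s‖ • R (ycirc ψ t) ∧
      (N s = R (cross3 (ycirc' ψ t) (ycirc ψ t)) ∨
        N s = -R (cross3 (ycirc' ψ t) (ycirc ψ t))) := by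
    intro s hs
    obtain ⟨t, ht⟩ := exists_eq_norm_smul_ycirc hsin R (by rw [hR, haW s hs, hcos])
    refine ⟨t, ht, eq_or_eq_neg_cross3_ycirc (hF.norm_tangent s hs) (hF.norm_normal s hs)
      (hF.inner_tangent_normal hI hs) (hr s hs) ?_ hsin R ht ?_⟩
    · rw [← hF.binormal_eq s hs, hb s hs]; exact hb0
    · rw [hR, hcos, inner_eq_of_inner_eq_mul_norm hI hF.hasDerivAt_curve hα0 haW hs,
        mul_div_assoc]
  choose! t ht using key
  exact ⟨ψ, hψ, R, fun s => ‖α s‖, t, fun s hs => ⟨norm_pos_iff.mpr (hα0 s hs), ht s hs⟩⟩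

end IsFrenetFrameOn

/-- A unit-speed curve with positive curvature is a geodesic on a circular cone
with vertex at the origin iff it is simultaneously a rectifying curve and a
slant helix. -/
theorem geodesic_on_circular_cone_iff (I : Set ℝ) (hIo : IsOpen I) (hIc : Convex ℝ I)
    (α T N B : ℝ → E3) (κ τ : ℝ → ℝ)
    (hα : ∀ s ∈ I, HasDerivAt α (T s) s)
    (hT : ∀ s ∈ I, HasDerivAt T (κ s • N s) s)
    (hN : ∀ s ∈ I, HasDerivAt N ((-κ s) • T s + τ s • B s) s)
    (hB : ∀ s ∈ I, HasDerivAt B ((-τ s) • N s) s)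
    (hTu : ∀ s ∈ I, ‖T s‖ = 1)
    (hNu : ∀ s ∈ I, ‖N s‖ = 1)
    (hBdef : ∀ s ∈ I, B s = cross3 (T s) (N s))
    (hκ : ∀ s ∈ I, 0 < κ s)
    (hne : I.Nonempty) :
    (∃ ψ : ℝ, ψ ∈ Set.Ioo 0 (Real.pi / 2) ∧
      ∃ (R : E3 ≃ₗᵢ[ℝ] E3) (u t : ℝ → ℝ), ∀ s ∈ I,
        0 < u s ∧
        α s = u s • R (ycirc ψ (t s)) ∧
        (N s = R (cross3 (ycirc' ψ (t s)) (ycirc ψ (t s))) ∨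
         N s = -R (cross3 (ycirc' ψ (t s)) (ycirc ψ (t s))))) ↔
      ((∀ s ∈ I, ⟪α s, N s⟫ = 0) ∧
       ∃ U : E3, ‖U‖ = 1 ∧ ∃ k : ℝ, ∀ s ∈ I, ⟪N s, U⟫ = k) := by
  have hF : IsFrenetFrameOn I α T N B κ τ := ⟨hα, hT, hN, hB, hTu, hNu, hBdef, hκ⟩
  have hNc : ContinuousOn N I := fun s hs => (hN s hs).continuousAt.continuousWithinAt
  show IsConeGeodesicOn I α N ↔ IsRectifyingOn I α N ∧ IsSlantHelixOn I N
  exact ⟨fun h => ⟨h.isRectifyingOn, h.isSlantHelixOn hIc.isPreconnected hNc⟩,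
    fun h => hF.isConeGeodesicOn hIo hIc.isPreconnected hne h.1 h.2⟩
end
end
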